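/- Let r ≥ 3, n ≥ 1, S ⊆ [r]^n. Then val(G_S^n) ≥ μ(S) = |S|/r^n. -/

import Mathlib

/-!
A question sequence of `G_Sⁿ` is the one-hot encoding of the string in `[r]ⁿ` listing the
special prover of each round, and these sequences are uniformly distributed. If every prover
answers in round `i` with `z = i` and with `T` = the set of rounds in which it was special,
then the sets `T` partition `[n]` according to that string, so this strategy wins whenever
the string lies in `S`, that is with probability `μ(S)`.
-/

/-- The value of an `r`-prover game: the question set is `Qbar`, a finite set of
question tuples; `V` is the verification predicate; the value is the maximum over
strategies (one function `Q j → A j` per prover) of the probability, over a uniformly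
random question tuple from `Qbar`, that the verifier accepts. -/
noncomputable def gameValue {r : ℕ} {Q A : Fin r → Type}
    (Qbar : Finset (∀ j, Q j)) (V : (∀ j, Q j) → (∀ j, A j) → Bool) : ℝ :=
  sSup { x : ℝ | ∃ S : ∀ j, Q j → A j,
    x = ((Qbar.filter fun q => V q (fun j => S j (q j)) = true).card : ℝ) / (Qbar.card : ℝ) }

/-- The value of the `n`-fold parallel repetition of a game: questions are `n`-tuples
of question tuples sampled independently and uniformly from `Qbar`, each prover `j`
sees only its own vector of questions, and the verifier accepts iff `V` accepts in
every coordinate. -/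
noncomputable def repValue {r : ℕ} {Q A : Fin r → Type} [∀ j, DecidableEq (Q j)]
    (n : ℕ) (Qbar : Finset (∀ j, Q j)) (V : (∀ j, Q j) → (∀ j, A j) → Bool) : ℝ :=
  sSup { x : ℝ | ∃ S : ∀ j, (Fin n → Q j) → (Fin n → A j),
    x = (((Fintype.piFinset fun _ : Fin n => Qbar).filter fun q =>
          ∀ i, V (q i) (fun j => S j (fun i' => q i' j) i) = true).card : ℝ) /
        ((Fintype.piFinset fun _ : Fin n => Qbar).card : ℝ) }
/-- The question set `Q̄_r ⊆ {0,1}^r`: tuples with exactly one coordinate equal to 1. -/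
def QbarR (r : ℕ) : Finset (Fin r → Bool) :=
  Finset.univ.filter fun q => (Finset.univ.filter fun j => q j = true).card = 1
/-- The point of a combinatorial pattern `b` (wildcard = `none`) at `q`. -/
def patternLine {r n : ℕ} (b : Fin n → Option (Fin r)) (q : Fin r) : Fin n → Fin r :=
  fun i => (b i).getD q

/-- `S ⊆ [r]^n` contains a combinatorial line: there is a pattern `b` (with at least one
wildcard) all of whose substitution instances lie in `S`. -/
def HasCombLine {r n : ℕ} (S : Set (Fin n → Fin r)) : Prop :=
  ∃ b : Fin n → Option (Fin r), (∃ i, b i = none) ∧ ∀ q : Fin r, patternLine b q ∈ S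
/-- The verifier of the game `G_S` (for `S ⊆ [r]^n`) over the question set `Q̄_r`:
each prover answers a pair `(T, z) ∈ 2^[n] × [n]`; the verifier accepts iff all the
`z`'s agree, the special prover's `z` lies in its set `T`, and the sets `T⁽¹⁾,…,T⁽ʳ⁾`
form a partition of `[n]` whose induced string (sending `i` to the unique `j` with
`i ∈ T⁽ʲ⁾`) belongs to `S`. -/
def VS {r n : ℕ} (S : Finset (Fin n → Fin r)) (q : Fin r → Bool)
    (ans : Fin r → Finset (Fin n) × Fin n) : Bool :=
  decide ((∀ j j' : Fin r, (ans j).2 = (ans j').2) ∧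
    (∀ a : Fin r, q a = true → (ans a).2 ∈ (ans a).1) ∧
    (∃ s : Fin n → Fin r, s ∈ S ∧ ∀ (i : Fin n) (j : Fin r), s i = j ↔ i ∈ (ans j).1))

def repWinningSet {r : ℕ} {Q A : Fin r → Type} [∀ j, DecidableEq (Q j)] (n : ℕ)
    (Qbar : Finset (∀ j, Q j)) (V : (∀ j, Q j) → (∀ j, A j) → Bool)
    (σ : ∀ j, (Fin n → Q j) → (Fin n → A j)) : Finset (Fin n → ∀ j, Q j) :=
  (Fintype.piFinset fun _ : Fin n => Qbar).filter fun q =>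
    ∀ i, V (q i) (fun j => σ j (fun i' => q i' j) i) = true

lemma le_repValue {r : ℕ} {Q A : Fin r → Type} [∀ j, DecidableEq (Q j)] (n : ℕ)
    (Qbar : Finset (∀ j, Q j)) (V : (∀ j, Q j) → (∀ j, A j) → Bool)
    (σ : ∀ j, (Fin n → Q j) → (Fin n → A j)) :
    ((repWinningSet n Qbar V σ).card : ℝ) / (Fintype.piFinset fun _ : Fin n => Qbar).card ≤
      repValue n Qbar V := by
  refine le_csSup ⟨1, ?_⟩ ⟨σ, rfl⟩
  rintro x ⟨τ, rfl⟩
  exact div_le_one_of_le₀ (by exact_mod_cast Finset.card_filter_le _ _) (by positivity)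

def oneHot {r : ℕ} (a : Fin r) : Fin r → Bool := fun j => decide (a = j)

lemma oneHot_injective {r : ℕ} : Function.Injective (oneHot (r := r)) := by
  intro a b h
  simpa [oneHot] using congrFun h b

lemma mem_QbarR_iff {r : ℕ} {q : Fin r → Bool} : q ∈ QbarR r ↔ ∃ a, oneHot a = q := by
  simp only [QbarR, Finset.mem_filter, Finset.mem_univ, true_and, Finset.card_eq_one]
  constructor
  · rintro ⟨a, ha⟩
    refine ⟨a, funext fun j => ?_⟩
    have hj : q j = true ↔ j = a := by simpa using Finset.ext_iff.mp ha j
    by_cases h : j = a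
    · subst h
      simp [oneHot, hj.mpr rfl]
    · simpa [oneHot, Ne.symm h] using mt hj.mp h
  · rintro ⟨a, rfl⟩
    exact ⟨a, by ext j; simp [oneHot, eq_comm]⟩

lemma QbarR_eq_map (r : ℕ) : QbarR r = Finset.univ.map ⟨oneHot, oneHot_injective⟩ := by
  ext q
  simp [mem_QbarR_iff]

lemma card_piFinset_QbarR (r n : ℕ) :
    (Fintype.piFinset fun _ : Fin n => QbarR r).card = r ^ n := by
  simp [Fintype.card_piFinset, QbarR_eq_map]

def honestStrategy (r n : ℕ) : Fin r → (Fin n → Bool) → Fin n → Finset (Fin n) × Fin n :=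
  fun _ x i => (Finset.univ.filter fun i' => x i' = true, i)

lemma image_oneHot_subset_repWinningSet {r n : ℕ} (S : Finset (Fin n → Fin r)) :
    S.image (oneHot ∘ ·) ⊆ repWinningSet n (QbarR r) (VS S) (honestStrategy r n) := by
  intro q hq
  obtain ⟨s, hs, rfl⟩ := Finset.mem_image.mp hq
  simp only [repWinningSet, Finset.mem_filter, Fintype.mem_piFinset, mem_QbarR_iff]
  refine ⟨fun i => ⟨s i, rfl⟩, fun i => ?_⟩
  simp only [VS, honestStrategy, decide_eq_true_eq]
  refine ⟨fun _ _ => trivial, fun a ha => by simpa using ha, s, hs, fun i' j => ?_⟩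
  simp [oneHot]

theorem statement6_general (r n : ℕ)
    (S : Finset (Fin n → Fin r)) :
    (S.card : ℝ) / (r : ℝ) ^ n ≤ repValue n (QbarR r) (VS S) := by
  have hcard : S.card ≤ (repWinningSet n (QbarR r) (VS S) (honestStrategy r n)).card := by
    calc S.card = (S.image (oneHot ∘ ·)).card :=
          (Finset.card_image_of_injective _ oneHot_injective.comp_left).symm
      _ ≤ _ := Finset.card_le_card (image_oneHot_subset_repWinningSet S)
  calc (S.card : ℝ) / (r : ℝ) ^ n
      ≤ (repWinningSet n (QbarR r) (VS S) (honestStrategy r n)).card / (r : ℝ) ^ n := by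
        gcongr
    _ = _ := by rw [← Nat.cast_pow, ← card_piFinset_QbarR]
    _ ≤ repValue n (QbarR r) (VS S) := le_repValue n _ _ _

/-- For `r ≥ 3`, `n ≥ 1` and `S ⊆ [r]^n`, the value of the `n`-fold parallel
repetition of the game `G_S` is at least `μ(S) = |S|/rⁿ`. -/
theorem statement6 (r n : ℕ) (hr : 3 ≤ r) (hn : 1 ≤ n)
    (S : Finset (Fin n → Fin r)) :
    (S.card : ℝ) / (r : ℝ) ^ n ≤ repValue n (QbarR r) (VS S) :=
  statement6_general r n S
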